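/- arXiv:2407.01401 — 2 statements merged into one kernel-verified Lean document; each statement's English description precedes it below -/
import Mathlib

section
/- (Proposition 1 of the paper, channel-independent form.) Under the secrecy-code setup, I(V_A; Z | V_B) ≤ min( Σ_{i∈A∪B} C_i , k ), where C_i := I(V_i; (Z, V_{{1,…,i−1}})) and k = |A|. (Note A ∪ B = R^c.) -/
open scoped Classical

noncomputable section

/-- `p` is a probability mass function on the finite sample space `Ω`. -/
def IsPMF {Ω : Type} [Fintype Ω] (p : Ω → ℝ) : Prop :=
  (∀ ω, 0 ≤ p ω) ∧ ∑ ω, p ω = 1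

/-- `P(X = x)`: the probability of the event `{X = x}` under the pmf `p`. -/
def prob {Ω : Type} [Fintype Ω] (p : Ω → ℝ) {α : Type} (X : Ω → α) (x : α) : ℝ :=
  ∑ ω, if X ω = x then p ω else 0

/-- Shannon entropy of `X` in bits (logarithm base 2). -/
def entropy {Ω : Type} [Fintype Ω] (p : Ω → ℝ) {α : Type} [Fintype α] (X : Ω → α) : ℝ :=
  -∑ x, prob p X x * Real.logb 2 (prob p X x)

/-- Mutual information `I(X;Y) = H(X) + H(Y) - H((X,Y))` in bits. -/
def mutInfo {Ω : Type} [Fintype Ω] (p : Ω → ℝ) {α β : Type} [Fintype α] [Fintype β]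
    (X : Ω → α) (Y : Ω → β) : ℝ :=
  entropy p X + entropy p Y - entropy p fun ω => (X ω, Y ω)

/-- Conditional mutual information
`I(X;Y∣W) = H((X,W)) + H((Y,W)) - H((X,Y,W)) - H(W)` in bits. -/
def condMutInfo {Ω : Type} [Fintype Ω] (p : Ω → ℝ) {α β γ : Type}
    [Fintype α] [Fintype β] [Fintype γ] (X : Ω → α) (Y : Ω → β) (W : Ω → γ) : ℝ :=
  entropy p (fun ω => (X ω, W ω)) + entropy p (fun ω => (Y ω, W ω))
    - entropy p (fun ω => (X ω, Y ω, W ω)) - entropy p W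

/-!
Swapping the roles of `V_A` and `Z`, `I(V_A; Z | V_B) ≤ I(Z; (V_A, V_B)) = I(Z; V_{A∪B})`.
Revealing the bits of `A ∪ B` one at a time in increasing order, the chain rule splits
`I(Z; V_{A∪B})` into terms `I(Z; V_i | V_S)` with `S ⊆ {j < i}`; each is at most
`I(V_i; (Z, V_S)) ≤ I(V_i; (Z, V_{<i})) = C_i` by nonnegativity of mutual information and data
processing. For the second bound, `I(V_A; Z | V_B) ≤ H(V_A) ≤ log₂ 2^k = k`.
-/

open Finset Real

section Probability

variable {Ω : Type} [Fintype Ω] {p : Ω → ℝ} {α β : Type}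

lemma prob_nonneg (hp : IsPMF p) (X : Ω → α) (x : α) : 0 ≤ prob p X x :=
  sum_nonneg fun ω _ => by split_ifs <;> simp [hp.1 ω]

lemma sum_prob_mul [Fintype α] (X : Ω → α) (f : α → ℝ) :
    ∑ x, prob p X x * f x = ∑ ω, p ω * f (X ω) := by
  simp only [prob, sum_mul, ite_mul, zero_mul]
  rw [sum_comm]
  simp

lemma sum_prob (hp : IsPMF p) [Fintype α] (X : Ω → α) : ∑ x, prob p X x = 1 := by
  simpa [hp.2] using sum_prob_mul (p := p) X fun _ => 1

lemma prob_le_prob_comp (hp : IsPMF p) (X : Ω → α) (g : α → β) (x : α) :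
    prob p X x ≤ prob p (fun ω => g (X ω)) (g x) :=
  sum_le_sum fun ω _ => by split_ifs with h h' <;> simp_all [hp.1 ω]

lemma prob_pos_of_pos (hp : IsPMF p) (X : Ω → α) {ω : Ω} (hω : 0 < p ω) :
    0 < prob p X (X ω) :=
  hω.trans_le <| single_le_sum (f := fun ω' => if X ω' = X ω then p ω' else 0)
    (fun ω' _ => by split_ifs <;> simp [hp.1 ω']) (mem_univ ω) |>.trans_eq' (by simp)

lemma exists_pos_of_prob_ne_zero (hp : IsPMF p) {X : Ω → α} {x : α} (h : prob p X x ≠ 0) :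
    ∃ ω, X ω = x ∧ 0 < p ω := by
  obtain ⟨ω, -, hω⟩ := exists_ne_zero_of_sum_ne_zero h
  split_ifs at hω with hX
  · exact ⟨ω, hX, (hp.1 ω).lt_of_ne' hω⟩
  · exact absurd rfl hω

lemma prob_comp_of_injective (X : Ω → α) {f : α → β} (hf : Function.Injective f) (x : α) :
    prob p (fun ω => f (X ω)) (f x) = prob p X x := by
  simp [prob, hf.eq_iff]

lemma prob_of_subsingleton (hp : IsPMF p) [Subsingleton α] (X : Ω → α) (x : α) :
    prob p X x = 1 := by
  simp [prob, Subsingleton.elim _ x, hp.2]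

lemma sum_prob_pair_left [Fintype α] (X : Ω → α) (Y : Ω → β) (y : β) :
    ∑ x, prob p (fun ω => (X ω, Y ω)) (x, y) = prob p Y y := by
  simp only [prob, Prod.mk.injEq]
  rw [sum_comm]
  refine sum_congr rfl fun ω _ => ?_
  by_cases h : Y ω = y <;> simp [h]

end Probability

section Entropy

variable {Ω : Type} [Fintype Ω] {p : Ω → ℝ} {α β : Type} [Fintype α] [Fintype β]

lemma entropy_eq_neg_sum (X : Ω → α) :
    entropy p X = -∑ ω, p ω * logb 2 (prob p X (X ω)) := by
  rw [entropy, sum_prob_mul X fun x => logb 2 (prob p X x)]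

lemma entropy_comp_of_injective (X : Ω → α) {f : α → β} (hf : Function.Injective f) :
    entropy p (fun ω => f (X ω)) = entropy p X := by
  simp only [entropy_eq_neg_sum, prob_comp_of_injective X hf]

lemma entropy_of_subsingleton (hp : IsPMF p) [Subsingleton α] (X : Ω → α) : entropy p X = 0 := by
  simp [entropy_eq_neg_sum, prob_of_subsingleton hp]

lemma entropy_comp_le (hp : IsPMF p) (X : Ω → α) (g : α → β) :
    entropy p (fun ω => g (X ω)) ≤ entropy p X := by
  rw [entropy_eq_neg_sum, entropy_eq_neg_sum, neg_le_neg_iff]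
  refine sum_le_sum fun ω _ => ?_
  rcases (hp.1 ω).eq_or_lt with hω | hω
  · simp [← hω]
  · have hX := prob_pos_of_pos hp X hω
    exact mul_le_mul_of_nonneg_left
      ((logb_le_logb one_lt_two hX (hX.trans_le (prob_le_prob_comp hp X g _))).mpr
        (prob_le_prob_comp hp X g _)) hω.le

-- Gibbs' inequality.
lemma sum_mul_logb_sub_logb_nonneg {ι : Type} [Fintype ι] {a b : ι → ℝ}
    (ha : ∀ i, 0 ≤ a i) (hb : ∀ i, 0 ≤ b i) (hab : ∀ i, a i ≠ 0 → b i ≠ 0)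
    (hsa : ∑ i, a i = 1) (hsb : ∑ i, b i ≤ 1) :
    0 ≤ ∑ i, a i * (logb 2 (a i) - logb 2 (b i)) := by
  have hterm : ∀ i, a i - b i ≤ a i * (log (a i) - log (b i)) := by
    intro i
    rcases (ha i).eq_or_lt with h | h
    · simp [← h, hb i]
    · have hbi := (hb i).lt_of_ne' (hab i h.ne')
      have := log_le_sub_one_of_pos (div_pos hbi h)
      rw [log_div hbi.ne' h.ne'] at this
      have hdiv : a i * (b i / a i - 1) = b i - a i := by field_simp
      linarith [mul_le_mul_of_nonneg_left this h.le]
  have hsum : 0 ≤ ∑ i, a i * (log (a i) - log (b i)) := by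
    have := sum_le_sum fun i (_ : i ∈ univ) => hterm i
    rw [sum_sub_distrib, hsa] at this
    linarith
  simp only [logb, ← sub_div, mul_div_assoc', ← sum_div]
  exact div_nonneg hsum (log_nonneg one_le_two)

lemma entropy_le_logb_card (hp : IsPMF p) (X : Ω → α) :
    entropy p X ≤ logb 2 (Fintype.card α) := by
  obtain ⟨ω⟩ : Nonempty Ω := by
    by_contra h
    simpa [not_nonempty_iff.mp h] using hp.2
  have hcard : (0 : ℝ) < Fintype.card α := by
    exact_mod_cast Fintype.card_pos_iff.mpr ⟨X ω⟩
  have := sum_mul_logb_sub_logb_nonneg (prob_nonneg hp X) (fun _ => by positivity)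
    (fun _ _ => by positivity) (sum_prob hp X) (b := fun _ => (Fintype.card α : ℝ)⁻¹)
    (by simp [hcard.ne'])
  simp only [mul_sub, sum_sub_distrib, ← sum_mul, sum_prob hp X, logb_inv] at this
  rw [entropy]
  linarith

lemma entropy_le_card_of_pi_bool {Ω ι : Type} [Fintype Ω] [Fintype ι] [DecidableEq ι]
    {p : Ω → ℝ} (hp : IsPMF p) (X : Ω → ι → Bool) : entropy p X ≤ Fintype.card ι := by
  simpa [logb_pow, logb_self_eq_one one_lt_two] using entropy_le_logb_card hp X

end Entropy

section MutualInformation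

variable {Ω : Type} [Fintype Ω] {p : Ω → ℝ} {α β γ : Type} [Fintype α] [Fintype β] [Fintype γ]

lemma mutInfo_comm (X : Ω → α) (Y : Ω → β) : mutInfo p X Y = mutInfo p Y X := by
  have := entropy_comp_of_injective (p := p) (fun ω => (X ω, Y ω)) Prod.swap_injective
  simp only [Prod.swap_prod_mk] at this
  unfold mutInfo
  rw [← this]
  ring

lemma condMutInfo_comm (X : Ω → α) (Y : Ω → β) (W : Ω → γ) :
    condMutInfo p X Y W = condMutInfo p Y X W := by
  have := entropy_comp_of_injective (p := p) (fun ω => (X ω, Y ω, W ω))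
    (f := fun t => (t.2.1, t.1, t.2.2)) fun s t h => by
      simp only [Prod.mk.injEq] at h
      exact Prod.ext h.2.1 (Prod.ext h.1 h.2.2)
  unfold condMutInfo
  rw [← this]
  ring

lemma mutInfo_pair_eq_add_condMutInfo (X : Ω → α) (Y : Ω → β) (W : Ω → γ) :
    mutInfo p X (fun ω => (Y ω, W ω)) = mutInfo p X W + condMutInfo p X Y W := by
  unfold mutInfo condMutInfo
  ring

lemma mutInfo_comp_right_of_injective (X : Ω → α) (Y : Ω → β) {f : β → γ}
    (hf : Function.Injective f) : mutInfo p X (fun ω => f (Y ω)) = mutInfo p X Y := by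
  unfold mutInfo
  rw [entropy_comp_of_injective Y hf,
    ← entropy_comp_of_injective (fun ω => (X ω, Y ω)) (Function.injective_id.prodMap hf)]
  rfl

end MutualInformation

section CondIndepCoupling

variable {Ω : Type} [Fintype Ω] {p : Ω → ℝ} {α β γ : Type}

-- Were `X` and `Y` conditionally independent given `W`, this would be the law of `(X, Y, W)`;
-- `I(X;Y|W)` is the relative entropy of the actual law from it.
variable (p) in
def condIndepCoupling (X : Ω → α) (Y : Ω → β) (W : Ω → γ) (t : α × β × γ) : ℝ :=
  prob p (fun ω => (X ω, W ω)) (t.1, t.2.2) * prob p (fun ω => (Y ω, W ω)) (t.2.1, t.2.2)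
    / prob p W t.2.2

variable (X : Ω → α) (Y : Ω → β) (W : Ω → γ)

lemma condIndepCoupling_nonneg (hp : IsPMF p) (t : α × β × γ) :
    0 ≤ condIndepCoupling p X Y W t :=
  div_nonneg (mul_nonneg (prob_nonneg hp _ _) (prob_nonneg hp _ _)) (prob_nonneg hp _ _)

lemma condIndepCoupling_pos (hp : IsPMF p) {ω : Ω} (hω : 0 < p ω) :
    0 < condIndepCoupling p X Y W (X ω, Y ω, W ω) :=
  div_pos (mul_pos (prob_pos_of_pos hp _ hω) (prob_pos_of_pos hp _ hω)) (prob_pos_of_pos hp _ hω)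

variable [Fintype α] [Fintype β] [Fintype γ]

lemma sum_condIndepCoupling_le_one (hp : IsPMF p) : ∑ t, condIndepCoupling p X Y W t ≤ 1 := by
  have hsum : ∑ t, condIndepCoupling p X Y W t = ∑ w, (∑ x, prob p (fun ω => (X ω, W ω)) (x, w))
      * (∑ y, prob p (fun ω => (Y ω, W ω)) (y, w)) / prob p W w := by
    simp only [condIndepCoupling, Fintype.sum_prod_type, sum_mul, mul_sum, sum_div]
    exact (sum_congr rfl fun _ _ => sum_comm).trans
      (sum_comm.trans (sum_congr rfl fun _ _ => sum_comm))
  simp only [hsum, sum_prob_pair_left]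
  rw [← sum_prob hp W]
  refine sum_le_sum fun w _ => ?_
  rcases eq_or_ne (prob p W w) 0 with h | h
  · simp [h]
  · rw [mul_div_cancel_right₀ _ h]

lemma condMutInfo_eq_sum_mul_logb_sub_logb (hp : IsPMF p) :
    condMutInfo p X Y W = ∑ t, prob p (fun ω => (X ω, Y ω, W ω)) t *
      (logb 2 (prob p (fun ω => (X ω, Y ω, W ω)) t) - logb 2 (condIndepCoupling p X Y W t)) := by
  have hterm : ∀ ω, p ω * logb 2 (condIndepCoupling p X Y W (X ω, Y ω, W ω)) =
      p ω * logb 2 (prob p (fun ω => (X ω, W ω)) (X ω, W ω))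
        + p ω * logb 2 (prob p (fun ω => (Y ω, W ω)) (Y ω, W ω))
        - p ω * logb 2 (prob p W (W ω)) := fun ω => by
    rcases (hp.1 ω).eq_or_lt with hω | hω
    · simp [← hω]
    · have hXW := prob_pos_of_pos hp (fun ω => (X ω, W ω)) hω
      have hYW := prob_pos_of_pos hp (fun ω => (Y ω, W ω)) hω
      rw [condIndepCoupling, logb_div (mul_pos hXW hYW).ne' (prob_pos_of_pos hp W hω).ne',
        logb_mul hXW.ne' hYW.ne']
      ring
  rw [sum_prob_mul (fun ω => (X ω, Y ω, W ω))]
  simp only [mul_sub, sum_sub_distrib, hterm, sum_add_distrib, condMutInfo, entropy_eq_neg_sum]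
  ring

lemma condMutInfo_nonneg (hp : IsPMF p) : 0 ≤ condMutInfo p X Y W := by
  rw [condMutInfo_eq_sum_mul_logb_sub_logb X Y W hp]
  refine sum_mul_logb_sub_logb_nonneg (prob_nonneg hp _) (condIndepCoupling_nonneg X Y W hp)
    (fun t ht => ?_) (sum_prob hp _) (sum_condIndepCoupling_le_one X Y W hp)
  obtain ⟨ω, rfl, hω⟩ := exists_pos_of_prob_ne_zero hp ht
  exact (condIndepCoupling_pos X Y W hp hω).ne'

end CondIndepCoupling

section InformationInequalities

variable {Ω : Type} [Fintype Ω] {p : Ω → ℝ} {α β γ : Type} [Fintype α] [Fintype β] [Fintype γ]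

lemma mutInfo_nonneg (hp : IsPMF p) (X : Ω → α) (Y : Ω → β) : 0 ≤ mutInfo p X Y := by
  have hcmi := condMutInfo_nonneg X Y (fun _ => ()) hp
  have hpair {ε : Type} [Fintype ε] (U : Ω → ε) : entropy p (fun ω => (U ω, ())) = entropy p U :=
    entropy_comp_of_injective U (f := fun u => (u, ())) fun _ _ h => congrArg Prod.fst h
  have htriple : entropy p (fun ω => (X ω, Y ω, ())) = entropy p (fun ω => (X ω, Y ω)) :=
    entropy_comp_of_injective (fun ω => (X ω, Y ω)) (f := fun t => (t.1, t.2, ())) fun s t h => by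
      simp only [Prod.mk.injEq, and_true] at h
      exact Prod.ext h.1 h.2
  rw [condMutInfo, hpair X, hpair Y, htriple, entropy_of_subsingleton hp fun _ : Ω => ()] at hcmi
  rw [mutInfo]
  linarith

lemma condMutInfo_le_mutInfo_pair (hp : IsPMF p) (X : Ω → α) (Y : Ω → β) (W : Ω → γ) :
    condMutInfo p X Y W ≤ mutInfo p X (fun ω => (Y ω, W ω)) := by
  rw [mutInfo_pair_eq_add_condMutInfo]
  linarith [mutInfo_nonneg hp X W]

lemma mutInfo_comp_right_le (hp : IsPMF p) (X : Ω → α) (Y : Ω → β) (g : β → γ) :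
    mutInfo p X (fun ω => g (Y ω)) ≤ mutInfo p X Y := by
  have hrecode : mutInfo p X (fun ω => (Y ω, g (Y ω))) = mutInfo p X Y :=
    mutInfo_comp_right_of_injective X Y (f := fun y => (y, g y)) fun _ _ h => congrArg Prod.fst h
  linarith [mutInfo_pair_eq_add_condMutInfo (p := p) X Y (fun ω => g (Y ω)),
    condMutInfo_nonneg X Y (fun ω => g (Y ω)) hp]

lemma mutInfo_le_entropy_left (hp : IsPMF p) (X : Ω → α) (Y : Ω → β) :
    mutInfo p X Y ≤ entropy p X := by
  have := entropy_comp_le hp (fun ω => (X ω, Y ω)) Prod.snd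
  rw [mutInfo]
  linarith

lemma condMutInfo_le_entropy_left (hp : IsPMF p) (X : Ω → α) (Y : Ω → β) (W : Ω → γ) :
    condMutInfo p X Y W ≤ entropy p X :=
  (condMutInfo_le_mutInfo_pair hp X Y W).trans (mutInfo_le_entropy_left hp X _)

end InformationInequalities

section SubTuple

variable {Ω : Type} [Fintype Ω] {p : Ω → ℝ} {n : ℕ} {β ζ : Type} [Fintype β] [Fintype ζ]

def subTuple (V : Fin n → Ω → β) (D : Finset (Fin n)) (ω : Ω) : {i // i ∈ D} → β :=
  fun i => V i.1 ω

-- The paper's `C_i = I(V_i; (Z, V_{<i}))`, with `V_{<i}` indexed by `Fin i`.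
variable (p) in
def bitChannelCapacity (V : Fin n → Ω → β) (Z : Ω → ζ) (i : Fin n) : ℝ :=
  mutInfo p (V i) fun ω => (Z ω, fun j : Fin i.val => V (Fin.castLE i.isLt.le j) ω)

variable (V : Fin n → Ω → β) (Z : Ω → ζ)

lemma mutInfo_subTuple_insert (a : Fin n) (S : Finset (Fin n)) :
    mutInfo p Z (fun ω => (V a ω, subTuple V S ω)) = mutInfo p Z (subTuple V (insert a S)) := by
  let f : ({i // i ∈ insert a S} → β) → β × ({i // i ∈ S} → β) :=
    fun u => (u ⟨a, mem_insert_self a S⟩, fun i => u ⟨i.1, mem_insert_of_mem i.2⟩)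
  have hf : Function.Injective f := fun u u' h => funext fun ⟨i, hi⟩ => by
    rcases mem_insert.mp hi with rfl | hiS
    · exact congrArg Prod.fst h
    · exact congrFun (congrArg Prod.snd h) ⟨i, hiS⟩
  have h := mutInfo_comp_right_of_injective (p := p) Z (subTuple V (insert a S)) hf
  unfold subTuple at h ⊢
  exact h

lemma mutInfo_subTuple_union (A B : Finset (Fin n)) :
    mutInfo p Z (fun ω => (subTuple V A ω, subTuple V B ω)) = mutInfo p Z (subTuple V (A ∪ B)) := by
  let f : ({i // i ∈ A ∪ B} → β) → ({i // i ∈ A} → β) × ({i // i ∈ B} → β) :=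
    fun u => (fun i => u ⟨i.1, mem_union_left B i.2⟩, fun i => u ⟨i.1, mem_union_right A i.2⟩)
  have hf : Function.Injective f := fun u u' h => funext fun ⟨i, hi⟩ => by
    rcases mem_union.mp hi with hiA | hiB
    · exact congrFun (congrArg Prod.fst h) ⟨i, hiA⟩
    · exact congrFun (congrArg Prod.snd h) ⟨i, hiB⟩
  have h := mutInfo_comp_right_of_injective (p := p) Z (subTuple V (A ∪ B)) hf
  unfold subTuple at h ⊢
  exact h

lemma mutInfo_subTuple_le_sum_bitChannelCapacity (hp : IsPMF p) (S : Finset (Fin n)) :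
    mutInfo p Z (subTuple V S) ≤ ∑ i ∈ S, bitChannelCapacity p V Z i := by
  induction S using Finset.induction_on_max with
  | empty =>
    rw [sum_empty, mutInfo_comm]
    exact (mutInfo_le_entropy_left hp _ Z).trans (entropy_of_subsingleton hp _).le
  | insert a S hmax ih =>
    have haS : a ∉ S := fun h => lt_irrefl a (hmax a h)
    have hlt : ∀ i : {i // i ∈ S}, i.1.val < a.val := fun i => hmax i.1 i.2
    have hprefix :
        mutInfo p (V a) (fun ω => (Z ω, subTuple V S ω)) ≤ bitChannelCapacity p V Z a := by
      exact mutInfo_comp_right_le hp (V a)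
        (fun ω => (Z ω, fun j : Fin a.val => V (Fin.castLE a.isLt.le j) ω))
        fun q => (q.1, fun i : {i // i ∈ S} => q.2 ⟨i.1.val, hlt i⟩)
    calc mutInfo p Z (subTuple V (insert a S))
        = mutInfo p Z (subTuple V S) + condMutInfo p (V a) Z (subTuple V S) := by
          rw [← mutInfo_subTuple_insert, mutInfo_pair_eq_add_condMutInfo, condMutInfo_comm]
      _ ≤ ∑ i ∈ S, bitChannelCapacity p V Z i + mutInfo p (V a) fun ω => (Z ω, subTuple V S ω) :=
          add_le_add ih (condMutInfo_le_mutInfo_pair hp _ _ _)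
      _ ≤ ∑ i ∈ S, bitChannelCapacity p V Z i + bitChannelCapacity p V Z a :=
          add_le_add_right hprefix _
      _ = ∑ i ∈ insert a S, bitChannelCapacity p V Z i := by rw [sum_insert haS, add_comm]

end SubTuple

theorem stmt4_general {Ω : Type} [Fintype Ω] (p : Ω → ℝ) (hp : IsPMF p)
    {n : ℕ} (V : Fin n → Ω → Bool) {ζ : Type} [Fintype ζ] (Z : Ω → ζ)
    (A B : Finset (Fin n)) :
    condMutInfo p (fun ω (i : {i // i ∈ A}) => V i.1 ω) Z
        (fun ω (i : {i // i ∈ B}) => V i.1 ω)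
      ≤ min (∑ i ∈ A ∪ B, mutInfo p (V i)
              (fun ω => (Z ω, fun j : Fin i.val => V (Fin.castLE i.isLt.le j) ω)))
          (A.card : ℝ) := by
  refine le_min ?_ ?_
  · calc condMutInfo p (subTuple V A) Z (subTuple V B)
        = condMutInfo p Z (subTuple V A) (subTuple V B) := condMutInfo_comm _ _ _
      _ ≤ mutInfo p Z (subTuple V (A ∪ B)) := by
          rw [← mutInfo_subTuple_union]
          exact condMutInfo_le_mutInfo_pair hp _ _ _
      _ ≤ ∑ i ∈ A ∪ B, bitChannelCapacity p V Z i :=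
          mutInfo_subTuple_le_sum_bitChannelCapacity V Z hp (A ∪ B)
  · calc condMutInfo p (subTuple V A) Z (subTuple V B) ≤ entropy p (subTuple V A) :=
          condMutInfo_le_entropy_left hp _ _ _
      _ ≤ A.card := by simpa using entropy_le_card_of_pi_bool hp (subTuple V A)

/-- **Proposition 1** (channel-independent form). In the secrecy-code setup —
`V 1, …, V n` i.i.d. uniform bits, `Z` arbitrary, `{1,…,n} = A ∪ R ∪ B` a partition —
`I(V_A ; Z ∣ V_B) ≤ min (∑_{i∈A∪B} C_i) k`,
where `C_i = I(V i ; (Z, V_{<i}))` and `k = |A|`. -/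
theorem stmt4 {Ω : Type} [Fintype Ω] (p : Ω → ℝ) (hp : IsPMF p)
    {n : ℕ} (V : Fin n → Ω → Bool) {ζ : Type} [Fintype ζ] (Z : Ω → ζ)
    (hV : ∀ v : Fin n → Bool, prob p (fun ω i => V i ω) v = (1 / 2 : ℝ) ^ n)
    (A R B : Finset (Fin n))
    (hAR : Disjoint A R) (hAB : Disjoint A B) (hRB : Disjoint R B)
    (hcover : A ∪ R ∪ B = Finset.univ) :
    condMutInfo p (fun ω (i : {i // i ∈ A}) => V i.1 ω) Z
        (fun ω (i : {i // i ∈ B}) => V i.1 ω)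
      ≤ min (∑ i ∈ A ∪ B, mutInfo p (V i)
              (fun ω => (Z ω, fun j : Fin i.val => V (Fin.castLE i.isLt.le j) ω)))
          (A.card : ℝ) :=
  stmt4_general p hp V Z A B
end
end

section
/- (Monte-Carlo identity for the MIS leakage over a BEC, Section V of the paper.) Let V be uniformly distributed on F_2^m, let M be an m × s matrix over F_2, and let A ⊆ {1,…,m}. Set U = V_A = (V_i)_{i∈A} and Z = V·M ∈ F_2^s. Then I(U; Z) = dim( colSpan(M) ∩ U_A ), where colSpan(M) ⊆ F_2^m is the span of the columns of M, U_A = {x ∈ F_2^m : x_i = 0 for all i ∉ A} is the span of the standard basis vectors e_i with i ∈ A, and mutual information is measured in bits (logarithm base 2). -/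
open scoped Classical

noncomputable section

/-! If `V` is uniform on `𝔽₂^m` and `f` is linear, every fibre of `f` over its range is a coset
of `ker f`, so `f V` is uniform on `range f` and `H(f V) = rank f`. Both `U = V_A` and `Z = V M`
are of this form, `Z` with the matrix `M` and `U` with the matrix whose columns are the `e_i`,
`i ∈ A`; up to relabelling, `(U, Z)` is `V` times the juxtaposition of the two matrices. The rank
of `v ↦ v N` is the dimension of the column span of `N`, so `I(U; Z)` is
`dim W₁ + dim W₂ - dim (W₁ ⊔ W₂) = dim (W₁ ⊓ W₂)` for the two column spans `W₁`, `W₂`. -/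

open Finset in
lemma AddMonoidHom.natCard_range_mul_card_fiber {G H : Type*} [AddGroup G] [Fintype G]
    [AddMonoid H] [DecidableEq H] (f : G →+ H) {b : H} (hb : b ∈ Set.range f) :
    Nat.card (Set.range f) * #{g | f g = b} = Fintype.card G := by
  rw [← card_univ, card_eq_sum_card_image f univ,
    sum_congr rfl fun y hy => card_fiber_eq_of_mem_range f (by simpa using hy) hb, sum_const,
    smul_eq_mul, ← Set.toFinset_range, Set.toFinset_card, Nat.card_eq_fintype_card]

section Entropy

open Finset

variable {Ω : Type} [Fintype Ω] (p : Ω → ℝ)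

lemma prob_comp {α β : Type} [Fintype α] (X : Ω → α) (g : α → β) (b : β) :
    prob p (fun ω => g (X ω)) b = ∑ x with g x = b, prob p X x := by
  simp only [prob, ← sum_filter]
  rw [sum_fiberwise_eq_sum_filter univ {x | g x = b} X p]
  simp

lemma prob_comp_of_uniform {α β : Type} [Fintype α] (X : Ω → α) {c : ℝ}
    (hX : ∀ x, prob p X x = c) (g : α → β) (b : β) :
    prob p (fun ω => g (X ω)) b = #{x | g x = b} * c := by
  simp [prob_comp, hX]

lemma entropy_eq_logb_card_of_uniformOn {α : Type} [Fintype α] (X : Ω → α) (S : Finset α)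
    (hX : ∀ x, prob p X x = if x ∈ S then (#S : ℝ)⁻¹ else 0) :
    entropy p X = Real.logb 2 #S := by
  have hterm : ∀ x, prob p X x * Real.logb 2 (prob p X x)
      = if x ∈ S then -((#S : ℝ)⁻¹ * Real.logb 2 #S) else 0 := by
    intro x
    rw [hX]
    split_ifs <;> simp [Real.logb_inv]
  simp only [entropy, hterm, sum_ite_mem, univ_inter, sum_neg_distrib, sum_const,
    nsmul_eq_mul, neg_neg, ← mul_assoc]
  rcases eq_or_ne (#S : ℝ) 0 with hS | hS
  · simp [hS]
  · rw [mul_inv_cancel₀ hS, one_mul]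

lemma entropy_comp_equiv {α β : Type} [Fintype α] [Fintype β] (X : Ω → α) (e : α ≃ β) :
    entropy p (fun ω => e (X ω)) = entropy p X := by
  have h : ∀ x, prob p (fun ω => e (X ω)) (e x) = prob p X x := by
    simp [prob]
  simp only [entropy]
  rw [← e.sum_comp]
  simp only [h]

lemma entropy_addMonoidHom_comp_of_uniform {G H : Type}
    [AddGroup G] [Fintype G] [AddMonoid H] [Fintype H] (V : Ω → G)
    (hV : ∀ g, prob p V g = (Fintype.card G : ℝ)⁻¹) (f : G →+ H) :
    entropy p (fun ω => f (V ω)) = Real.logb 2 (Nat.card (Set.range f)) := by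
  rw [Nat.card_eq_card_toFinset]
  refine entropy_eq_logb_card_of_uniformOn p _ _ fun b => ?_
  rw [prob_comp_of_uniform p V hV]
  split_ifs with hb
  · have hcard := f.natCard_range_mul_card_fiber (Set.mem_toFinset.mp hb)
    rw [Nat.card_eq_card_toFinset] at hcard
    have hG : (Fintype.card G : ℝ) ≠ 0 := by positivity
    rw [← hcard] at hG ⊢
    push_cast at hG ⊢
    have hfiber := right_ne_zero_of_mul hG
    field_simp
  · have hfiber : ({g | f g = b} : Finset G) = ∅ := by
      simpa using fun g hg => hb (by simp [← hg])
    simp [hfiber]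

end Entropy

section VecMul

open Module Submodule Matrix

variable {Ω : Type} [Fintype Ω] (p : Ω → ℝ) {n : Type} [Fintype n] (V : Ω → (n → ZMod 2))
  (hV : ∀ v, prob p V v = (1 / 2 : ℝ) ^ Fintype.card n)
include hV

lemma entropy_vecMul_of_uniform {ι : Type} [Fintype ι] [DecidableEq ι]
    (N : Matrix n ι (ZMod 2)) :
    entropy p (fun ω => V ω ᵥ* N) = finrank (ZMod 2) (span (ZMod 2) (Set.range N.col)) := by
  have hV' : ∀ v, prob p V v = (Fintype.card (n → ZMod 2) : ℝ)⁻¹ := by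
    simp [hV, ZMod.card]
  have hrange : Nat.card (Set.range N.vecMulLinear)
      = 2 ^ finrank (ZMod 2) (span (ZMod 2) (Set.range N.col)) := by
    rw [← LinearMap.coe_range, SetLike.coe_sort_coe, natCard_eq_pow_finrank (K := ZMod 2),
      Nat.card_zmod, range_vecMulLinear, ← rank_eq_finrank_span_row, rank_eq_finrank_span_cols]
  have h := entropy_addMonoidHom_comp_of_uniform p V hV' N.vecMulLinear.toAddMonoidHom
  rwa [LinearMap.toAddMonoidHom_coe, hrange, Nat.cast_pow, Nat.cast_ofNat, Real.logb_pow,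
    Real.logb_self_eq_one one_lt_two, mul_one] at h

lemma mutInfo_vecMul_of_uniform {ι₁ ι₂ : Type} [Fintype ι₁] [DecidableEq ι₁] [Fintype ι₂]
    [DecidableEq ι₂] (N₁ : Matrix n ι₁ (ZMod 2)) (N₂ : Matrix n ι₂ (ZMod 2)) :
    mutInfo p (fun ω => V ω ᵥ* N₁) (fun ω => V ω ᵥ* N₂)
      = finrank (ZMod 2)
          ↥(span (ZMod 2) (Set.range N₁.col) ⊓ span (ZMod 2) (Set.range N₂.col)) := by
  have hpair : (fun ω => (V ω ᵥ* N₁, V ω ᵥ* N₂))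
      = fun ω => Equiv.sumArrowEquivProdArrow ι₁ ι₂ (ZMod 2) (V ω ᵥ* fromCols N₁ N₂) := by
    ext <;> simp
  have hspan : span (ZMod 2) (Set.range (fromCols N₁ N₂).col)
      = span (ZMod 2) (Set.range N₁.col) ⊔ span (ZMod 2) (Set.range N₂.col) := by
    have hcol : (fromCols N₁ N₂).col = Sum.elim N₁.col N₂.col := by
      ext (j | j) i <;> rfl
    rw [hcol, Set.Sum.elim_range, span_union]
  have hdim := finrank_sup_add_finrank_inf_eq (span (ZMod 2) (Set.range N₁.col))
    (span (ZMod 2) (Set.range N₂.col))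
  rw [mutInfo, hpair, entropy_comp_equiv, entropy_vecMul_of_uniform p V hV,
    entropy_vecMul_of_uniform p V hV, entropy_vecMul_of_uniform p V hV, hspan]
  have := congrArg ((↑) : ℕ → ℝ) hdim
  push_cast at this
  linarith

end VecMul

theorem stmt14_general {Ω : Type} [Fintype Ω] (p : Ω → ℝ)
    {m s : ℕ} (M : Matrix (Fin m) (Fin s) (ZMod 2))
    (V : Ω → (Fin m → ZMod 2))
    (hV : ∀ v, prob p V v = (1 / 2 : ℝ) ^ m)
    (A : Finset (Fin m)) :
    mutInfo p (fun ω (i : {i // i ∈ A}) => V ω i.1) (fun ω => Matrix.vecMul (V ω) M)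
      = (Module.finrank (ZMod 2)
          ↥(Submodule.span (ZMod 2) (Set.range fun j => fun i => M i j)
            ⊓ Submodule.span (ZMod 2)
                ((fun i => (Pi.single i 1 : Fin m → ZMod 2)) '' (A : Set (Fin m)))) : ℝ) := by
  let E : Matrix (Fin m) A (ZMod 2) :=
    (Matrix.of fun a : A => (Pi.single a.1 1 : Fin m → ZMod 2)).transpose
  have hU : (fun ω (a : A) => V ω a.1) = fun ω => Matrix.vecMul (V ω) E := by
    ext ω a
    simp [E, Matrix.vecMul_transpose, Matrix.mulVec]
  have hcols :
      Set.range E.col = (fun i => (Pi.single i 1 : Fin m → ZMod 2)) '' (A : Set (Fin m)) := by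
    rw [Set.image_eq_range]
    rfl
  rw [hU, mutInfo_vecMul_of_uniform p V (by simpa using hV), inf_comm, hcols]
  rfl

/-- **Monte-Carlo identity** for the MIS leakage over a BEC: for `V` uniform on `F_2^m`,
`U = V_A` and `Z = V⬝M`,
`I(U ; Z) = dim (colSpan M ⊓ U_A)`, where `U_A` is the span of the standard basis
vectors `e_i`, `i ∈ A`. -/
theorem stmt14 {Ω : Type} [Fintype Ω] (p : Ω → ℝ) (hp : IsPMF p)
    {m s : ℕ} (M : Matrix (Fin m) (Fin s) (ZMod 2))
    (V : Ω → (Fin m → ZMod 2))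
    (hV : ∀ v, prob p V v = (1 / 2 : ℝ) ^ m)
    (A : Finset (Fin m)) :
    mutInfo p (fun ω (i : {i // i ∈ A}) => V ω i.1) (fun ω => Matrix.vecMul (V ω) M)
      = (Module.finrank (ZMod 2)
          ↥(Submodule.span (ZMod 2) (Set.range fun j => fun i => M i j)
            ⊓ Submodule.span (ZMod 2)
                ((fun i => (Pi.single i 1 : Fin m → ZMod 2)) '' (A : Set (Fin m)))) : ℝ) :=
  stmt14_general p M V hV A
end
end
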